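/- arXiv:1712.09644 — 2 statements merged into one kernel-verified Lean document; each statement's English description precedes it below -/
import Mathlib

section
/- If the ground metric D on Ω₁ × Ω₂ is additive, i.e. D((i₁,i₂),(j₁,j₂)) = D₁(i₁,j₁) + D₂(i₂,j₂), and p = p₁ ⊗ p₂ and q = q₁ ⊗ q₂ are product probability distributions on the finite set Ω₁ × Ω₂, then EMD(p, q) = EMD(p₁, q₁) + EMD(p₂, q₂), where each EMD is taken with respect to the corresponding ground metric. -/
open scoped BigOperators

/-- A probability distribution on a finite set. -/
def IsProb {Ω : Type*} [Fintype Ω] (p : Ω → ℝ) : Prop :=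
  (∀ i, 0 ≤ p i) ∧ ∑ i, p i = 1

/-- A flow from `p` to `q`: nonnegative, with row marginals `p` and column marginals `q`. -/
def IsFlow {Ω : Type*} [Fintype Ω] (p q : Ω → ℝ) (f : Ω → Ω → ℝ) : Prop :=
  (∀ i j, 0 ≤ f i j) ∧ (∀ i, ∑ j, f i j = p i) ∧ (∀ j, ∑ i, f i j = q j)

/-- The earth mover's distance with ground distance `D`. -/
noncomputable def EMD {Ω : Type*} [Fintype Ω] (D : Ω → Ω → ℝ) (p q : Ω → ℝ) : ℝ :=
  sInf {c : ℝ | ∃ f : Ω → Ω → ℝ, IsFlow p q f ∧ c = ∑ i, ∑ j, f i j * D i j}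

/-- `D` is a metric. -/
def IsMetric {Ω : Type*} (D : Ω → Ω → ℝ) : Prop :=
  (∀ x y, 0 ≤ D x y) ∧ (∀ x y, D x y = 0 ↔ x = y) ∧ (∀ x y, D x y = D y x) ∧
    (∀ x y z, D x z ≤ D x y + D y z)

/-!
For `≤`, the product `f₁ (i₁, j₁) * f₂ (i₂, j₂)` of two flows is a flow between the product
distributions, and since both flows have total mass one its cost under `D₁ + D₂` is
`cost f₁ + cost f₂`. For `≥`, any flow on `Ω₁ × Ω₂` pushes forward along the two projections to
flows `p₁ → q₁` and `p₂ → q₂`, and an additive ground cost splits exactly into the costs of these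
two marginal flows.
-/

open Finset

section Flow

variable {Ω : Type*} [Fintype Ω] {p q : Ω → ℝ} {f : Ω → Ω → ℝ}

def flowCost (D f : Ω → Ω → ℝ) : ℝ :=
  ∑ i, ∑ j, f i j * D i j

theorem flowCost_add_left (D E f : Ω → Ω → ℝ) :
    flowCost (fun a b => D a b + E a b) f = flowCost D f + flowCost E f := by
  simp only [flowCost, mul_add, sum_add_distrib]

theorem IsFlow.sum_sum_eq (hf : IsFlow p q f) : ∑ i, ∑ j, f i j = ∑ i, p i :=
  sum_congr rfl fun i _ => hf.2.1 i

theorem IsFlow.le_row (hf : IsFlow p q f) (i j : Ω) : f i j ≤ p i :=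
  hf.2.1 i ▸ single_le_sum (fun j _ => hf.1 i j) (mem_univ j)

theorem IsFlow.neg_sum_le_flowCost (hf : IsFlow p q f) (D : Ω → Ω → ℝ) :
    -∑ i, ∑ j, p i * |D i j| ≤ flowCost D f := by
  rw [flowCost, ← sum_neg_distrib]
  refine sum_le_sum fun i _ => ?_
  rw [← sum_neg_distrib]
  refine sum_le_sum fun j _ => ?_
  nlinarith [neg_abs_le (D i j), abs_nonneg (D i j), hf.1 i j, hf.le_row i j]

theorem IsProb.isFlow_mul (hp : IsProb p) (hq : IsProb q) :
    IsFlow p q fun i j => p i * q j :=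
  ⟨fun i j => mul_nonneg (hp.1 i) (hq.1 j), fun i => by rw [← mul_sum, hq.2, mul_one],
    fun j => by rw [← sum_mul, hp.2, one_mul]⟩

theorem IsFlow.emd_le (hf : IsFlow p q f) (D : Ω → Ω → ℝ) : EMD D p q ≤ flowCost D f :=
  csInf_le ⟨_, by rintro _ ⟨g, hg, rfl⟩; exact hg.neg_sum_le_flowCost D⟩ ⟨f, hf, rfl⟩

theorem le_emd_of_forall_isFlow (hp : IsProb p) (hq : IsProb q) {D : Ω → Ω → ℝ} {c : ℝ}
    (h : ∀ f, IsFlow p q f → c ≤ flowCost D f) : c ≤ EMD D p q :=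
  le_csInf ⟨_, _, hp.isFlow_mul hq, rfl⟩ (by rintro _ ⟨f, hf, rfl⟩; exact h f hf)

end Flow

section Pushforward

variable {Ω Ω' : Type*} [Fintype Ω] [Fintype Ω'] [DecidableEq Ω'] (π : Ω → Ω')

def pushforward (p : Ω → ℝ) (i' : Ω') : ℝ :=
  ∑ a with π a = i', p a

def pushforwardFlow (f : Ω → Ω → ℝ) (i' j' : Ω') : ℝ :=
  ∑ a with π a = i', ∑ b with π b = j', f a b

variable {π}

theorem sum_fiberwise_apply (h : Ω → Ω' → ℝ) :
    ∑ i', ∑ a with π a = i', h a i' = ∑ a, h a (π a) := by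
  rw [← sum_fiberwise univ π]
  exact sum_congr rfl fun i' _ => sum_congr rfl fun a ha => by rw [(mem_filter.1 ha).2]

theorem IsFlow.pushforward {p q : Ω → ℝ} {f : Ω → Ω → ℝ} (hf : IsFlow p q f) :
    IsFlow (pushforward π p) (pushforward π q) (pushforwardFlow π f) := by
  refine ⟨fun i' j' => sum_nonneg fun a _ => sum_nonneg fun b _ => hf.1 a b, fun i' => ?_,
    fun j' => ?_⟩
  · simp only [pushforwardFlow]
    rw [sum_comm]
    exact sum_congr rfl fun a _ => by rw [sum_fiberwise, hf.2.1]
  · simp only [pushforwardFlow]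
    rw [sum_fiberwise, sum_comm]
    exact sum_congr rfl fun b _ => hf.2.2 b

theorem flowCost_comp (D' : Ω' → Ω' → ℝ) (f : Ω → Ω → ℝ) :
    flowCost (fun a b => D' (π a) (π b)) f = flowCost D' (pushforwardFlow π f) := by
  simp only [flowCost, pushforwardFlow, sum_mul]
  symm
  calc ∑ i', ∑ j', ∑ a with π a = i', ∑ b with π b = j', f a b * D' i' j'
      = ∑ i', ∑ a with π a = i', ∑ j', ∑ b with π b = j', f a b * D' i' j' :=
        sum_congr rfl fun _ _ => sum_comm
    _ = ∑ i', ∑ a with π a = i', ∑ b, f a b * D' i' (π b) :=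
        sum_congr rfl fun i' _ => sum_congr rfl fun a _ =>
          sum_fiberwise_apply fun b j' => f a b * D' i' j'
    _ = ∑ a, ∑ b, f a b * D' (π a) (π b) :=
        sum_fiberwise_apply fun a i' => ∑ b, f a b * D' i' (π b)

end Pushforward

section Product

variable {Ω₁ Ω₂ : Type*} [Fintype Ω₁] [Fintype Ω₂]

theorem le_emd_add_emd_of_forall_isFlow {p₁ q₁ : Ω₁ → ℝ} {p₂ q₂ : Ω₂ → ℝ} (hp₁ : IsProb p₁)
    (hq₁ : IsProb q₁) (hp₂ : IsProb p₂) (hq₂ : IsProb q₂) {D₁ : Ω₁ → Ω₁ → ℝ}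
    {D₂ : Ω₂ → Ω₂ → ℝ} {c : ℝ}
    (h : ∀ f₁ f₂, IsFlow p₁ q₁ f₁ → IsFlow p₂ q₂ f₂ → c ≤ flowCost D₁ f₁ + flowCost D₂ f₂) :
    c ≤ EMD D₁ p₁ q₁ + EMD D₂ p₂ q₂ := by
  have h' : c - EMD D₂ p₂ q₂ ≤ EMD D₁ p₁ q₁ :=
    le_emd_of_forall_isFlow hp₁ hq₁ fun f₁ hf₁ => sub_le_comm.1 <|
      le_emd_of_forall_isFlow hp₂ hq₂ fun f₂ hf₂ => sub_le_iff_le_add'.2 (h f₁ f₂ hf₁ hf₂)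
  linarith

theorem sum_sum_mul_sum_sum (g : Ω₁ → Ω₁ → ℝ) (h : Ω₂ → Ω₂ → ℝ) :
    ∑ a : Ω₁ × Ω₂, ∑ b : Ω₁ × Ω₂, g a.1 b.1 * h a.2 b.2 =
      (∑ i, ∑ j, g i j) * ∑ k, ∑ l, h k l := by
  simp only [Fintype.sum_prod_type, Fintype.sum_mul_sum]

theorem IsProb.mul {p₁ : Ω₁ → ℝ} {p₂ : Ω₂ → ℝ} (hp₁ : IsProb p₁) (hp₂ : IsProb p₂) :
    IsProb fun a : Ω₁ × Ω₂ => p₁ a.1 * p₂ a.2 := by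
  refine ⟨fun a => mul_nonneg (hp₁.1 a.1) (hp₂.1 a.2), ?_⟩
  simp only [Fintype.sum_prod_type, ← Fintype.sum_mul_sum, hp₁.2, hp₂.2, one_mul]

theorem IsFlow.mul {p₁ q₁ : Ω₁ → ℝ} {p₂ q₂ : Ω₂ → ℝ} {f₁ : Ω₁ → Ω₁ → ℝ} {f₂ : Ω₂ → Ω₂ → ℝ}
    (hf₁ : IsFlow p₁ q₁ f₁) (hf₂ : IsFlow p₂ q₂ f₂) :
    IsFlow (fun a : Ω₁ × Ω₂ => p₁ a.1 * p₂ a.2) (fun a : Ω₁ × Ω₂ => q₁ a.1 * q₂ a.2)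
      (fun a b : Ω₁ × Ω₂ => f₁ a.1 b.1 * f₂ a.2 b.2) := by
  refine ⟨fun a b => mul_nonneg (hf₁.1 _ _) (hf₂.1 _ _), fun a => ?_, fun b => ?_⟩
  · simp only [Fintype.sum_prod_type, ← Fintype.sum_mul_sum, hf₁.2.1, hf₂.2.1]
  · simp only [Fintype.sum_prod_type, ← Fintype.sum_mul_sum, hf₁.2.2, hf₂.2.2]

theorem IsFlow.flowCost_mul {p₁ q₁ : Ω₁ → ℝ} {p₂ q₂ : Ω₂ → ℝ} {f₁ : Ω₁ → Ω₁ → ℝ}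
    {f₂ : Ω₂ → Ω₂ → ℝ} (hf₁ : IsFlow p₁ q₁ f₁) (hf₂ : IsFlow p₂ q₂ f₂)
    (hp₁ : ∑ i, p₁ i = 1) (hp₂ : ∑ i, p₂ i = 1) (D₁ : Ω₁ → Ω₁ → ℝ) (D₂ : Ω₂ → Ω₂ → ℝ) :
    flowCost (fun a b : Ω₁ × Ω₂ => D₁ a.1 b.1 + D₂ a.2 b.2)
        (fun a b : Ω₁ × Ω₂ => f₁ a.1 b.1 * f₂ a.2 b.2) =
      flowCost D₁ f₁ + flowCost D₂ f₂ := by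
  have h₁ : ∑ a : Ω₁ × Ω₂, ∑ b : Ω₁ × Ω₂, f₁ a.1 b.1 * D₁ a.1 b.1 * f₂ a.2 b.2 =
      flowCost D₁ f₁ := by
    rw [sum_sum_mul_sum_sum (fun i j => f₁ i j * D₁ i j), hf₂.sum_sum_eq, hp₂, mul_one, flowCost]
  have h₂ : ∑ a : Ω₁ × Ω₂, ∑ b : Ω₁ × Ω₂, f₁ a.1 b.1 * (f₂ a.2 b.2 * D₂ a.2 b.2) =
      flowCost D₂ f₂ := by
    rw [sum_sum_mul_sum_sum f₁ (fun i j => f₂ i j * D₂ i j), hf₁.sum_sum_eq, hp₁, one_mul,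
      flowCost]
  rw [flowCost_add_left, ← h₁, ← h₂]
  congr 1 <;> exact sum_congr rfl fun a _ => sum_congr rfl fun b _ => by ring

theorem pushforward_fst_mul [DecidableEq Ω₁] (p₁ : Ω₁ → ℝ) {p₂ : Ω₂ → ℝ}
    (hp₂ : ∑ i, p₂ i = 1) :
    pushforward Prod.fst (fun a : Ω₁ × Ω₂ => p₁ a.1 * p₂ a.2) = p₁ := by
  ext i
  simp [pushforward, sum_filter, Fintype.sum_prod_type, ← mul_sum, hp₂]

theorem pushforward_snd_mul [DecidableEq Ω₂] {p₁ : Ω₁ → ℝ} (hp₁ : ∑ i, p₁ i = 1)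
    (p₂ : Ω₂ → ℝ) :
    pushforward Prod.snd (fun a : Ω₁ × Ω₂ => p₁ a.1 * p₂ a.2) = p₂ := by
  ext i
  simp [pushforward, sum_filter, Fintype.sum_prod_type_right, ← sum_mul, hp₁]

theorem flowCost_add_eq_pushforwardFlow [DecidableEq Ω₁] [DecidableEq Ω₂]
    (D₁ : Ω₁ → Ω₁ → ℝ) (D₂ : Ω₂ → Ω₂ → ℝ) (f : Ω₁ × Ω₂ → Ω₁ × Ω₂ → ℝ) :
    flowCost (fun a b => D₁ a.1 b.1 + D₂ a.2 b.2) f =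
      flowCost D₁ (pushforwardFlow Prod.fst f) + flowCost D₂ (pushforwardFlow Prod.snd f) := by
  rw [flowCost_add_left, flowCost_comp (π := Prod.fst), flowCost_comp (π := Prod.snd)]

end Product

theorem emd_product_additive_general
    {Ω₁ Ω₂ : Type*} [Fintype Ω₁] [Fintype Ω₂]
    (D₁ : Ω₁ → Ω₁ → ℝ) (D₂ : Ω₂ → Ω₂ → ℝ)
    (p₁ q₁ : Ω₁ → ℝ) (p₂ q₂ : Ω₂ → ℝ)
    (hp₁ : IsProb p₁) (hq₁ : IsProb q₁) (hp₂ : IsProb p₂) (hq₂ : IsProb q₂) :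
    EMD (fun a b : Ω₁ × Ω₂ => D₁ a.1 b.1 + D₂ a.2 b.2)
        (fun a : Ω₁ × Ω₂ => p₁ a.1 * p₂ a.2)
        (fun a : Ω₁ × Ω₂ => q₁ a.1 * q₂ a.2)
      = EMD D₁ p₁ q₁ + EMD D₂ p₂ q₂ := by
  classical
  refine le_antisymm ?_ <| le_emd_of_forall_isFlow (hp₁.mul hp₂) (hq₁.mul hq₂) fun f hf => ?_
  · refine le_emd_add_emd_of_forall_isFlow hp₁ hq₁ hp₂ hq₂ fun f₁ f₂ hf₁ hf₂ => ?_
    rw [← hf₁.flowCost_mul hf₂ hp₁.2 hp₂.2]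
    exact (hf₁.mul hf₂).emd_le _
  · have hf₁ := hf.pushforward (π := Prod.fst)
    have hf₂ := hf.pushforward (π := Prod.snd)
    rw [pushforward_fst_mul p₁ hp₂.2, pushforward_fst_mul q₁ hq₂.2] at hf₁
    rw [pushforward_snd_mul hp₁.2 p₂, pushforward_snd_mul hq₁.2 q₂] at hf₂
    rw [flowCost_add_eq_pushforwardFlow]
    exact add_le_add (hf₁.emd_le D₁) (hf₂.emd_le D₂)

theorem emd_product_additive
    {Ω₁ Ω₂ : Type*} [Fintype Ω₁] [Fintype Ω₂]
    (D₁ : Ω₁ → Ω₁ → ℝ) (D₂ : Ω₂ → Ω₂ → ℝ)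
    (hD₁ : IsMetric D₁) (hD₂ : IsMetric D₂)
    (p₁ q₁ : Ω₁ → ℝ) (p₂ q₂ : Ω₂ → ℝ)
    (hp₁ : IsProb p₁) (hq₁ : IsProb q₁) (hp₂ : IsProb p₂) (hq₂ : IsProb q₂) :
    EMD (fun a b : Ω₁ × Ω₂ => D₁ a.1 b.1 + D₂ a.2 b.2)
        (fun a : Ω₁ × Ω₂ => p₁ a.1 * p₂ a.2)
        (fun a : Ω₁ × Ω₂ => q₁ a.1 * q₂ a.2)
      = EMD D₁ p₁ q₁ + EMD D₂ p₂ q₂ :=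
  emd_product_additive_general D₁ D₂ p₁ q₁ p₂ q₂ hp₁ hq₁ hp₂ hq₂
end

section
/- Let p = p₁ ⊗ p₂ and q = q₁ ⊗ q₂ be product probability distributions on Ω₁ × Ω₂ with additive ground metric D((i₁,i₂),(j₁,j₂)) = D₁(i₁,j₁) + D₂(i₂,j₂). Then EMD(p, q) ≥ EMD(p₁, q₁) + EMD(p₂, q₂). -/
open scoped BigOperators

lemma sum3_rot {α β γ : Type*} [Fintype α] [Fintype β] [Fintype γ] (g : α → β → γ → ℝ) :
    ∑ a, ∑ b, ∑ c, g a b c = ∑ c, ∑ a, ∑ b, g a b c :=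
  calc ∑ a, ∑ b, ∑ c, g a b c = ∑ a, ∑ c, ∑ b, g a b c :=
        Finset.sum_congr rfl fun a _ => Finset.sum_comm
    _ = ∑ c, ∑ a, ∑ b, g a b c := Finset.sum_comm

lemma sum3_rev {α β γ : Type*} [Fintype α] [Fintype β] [Fintype γ] (g : α → β → γ → ℝ) :
    ∑ a, ∑ b, ∑ c, g a b c = ∑ c, ∑ b, ∑ a, g a b c :=
  calc ∑ a, ∑ b, ∑ c, g a b c = ∑ b, ∑ a, ∑ c, g a b c := Finset.sum_comm
    _ = ∑ b, ∑ c, ∑ a, g a b c := Finset.sum_congr rfl fun b _ => Finset.sum_comm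
    _ = ∑ c, ∑ b, ∑ a, g a b c := Finset.sum_comm

lemma sum4_swap {α β γ δ : Type*} [Fintype α] [Fintype β] [Fintype γ] [Fintype δ]
    (g : α → β → γ → δ → ℝ) :
    ∑ a, ∑ b, ∑ c, ∑ d, g a b c d = ∑ b, ∑ d, ∑ a, ∑ c, g a b c d := by
  rw [Finset.sum_comm]
  apply Finset.sum_congr rfl; intro b _
  exact sum3_rot _

lemma EMD_le_cost {Ω : Type*} [Fintype Ω] (D : Ω → Ω → ℝ) (hD : ∀ x y, 0 ≤ D x y)
    (p q : Ω → ℝ) (f : Ω → Ω → ℝ) (hf : IsFlow p q f) :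
    EMD D p q ≤ ∑ i, ∑ j, f i j * D i j := by
  apply csInf_le
  · refine ⟨0, ?_⟩
    rintro c ⟨g, hg, rfl⟩
    exact Finset.sum_nonneg fun i _ => Finset.sum_nonneg fun j _ =>
      mul_nonneg (hg.1 i j) (hD i j)
  · exact ⟨f, hf, rfl⟩

theorem emd_product_ge_sum_of_marginal_emds
    {Ω₁ Ω₂ : Type*} [Fintype Ω₁] [Fintype Ω₂]
    (D₁ : Ω₁ → Ω₁ → ℝ) (D₂ : Ω₂ → Ω₂ → ℝ)
    (hD₁ : IsMetric D₁) (hD₂ : IsMetric D₂)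
    (p₁ q₁ : Ω₁ → ℝ) (p₂ q₂ : Ω₂ → ℝ)
    (hp₁ : IsProb p₁) (hq₁ : IsProb q₁) (hp₂ : IsProb p₂) (hq₂ : IsProb q₂) :
    EMD (fun a b : Ω₁ × Ω₂ => D₁ a.1 b.1 + D₂ a.2 b.2)
        (fun a : Ω₁ × Ω₂ => p₁ a.1 * p₂ a.2)
        (fun a : Ω₁ × Ω₂ => q₁ a.1 * q₂ a.2)
      ≥ EMD D₁ p₁ q₁ + EMD D₂ p₂ q₂ := by
  set p : Ω₁ × Ω₂ → ℝ := fun a => p₁ a.1 * p₂ a.2 with hp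
  set q : Ω₁ × Ω₂ → ℝ := fun a => q₁ a.1 * q₂ a.2 with hq
  rw [ge_iff_le, EMD]
  apply le_csInf
  · -- nonempty: independent coupling
    refine ⟨∑ i, ∑ j, (p i * q j) * (D₁ i.1 j.1 + D₂ i.2 j.2),
      fun i j => p i * q j, ⟨fun i j => mul_nonneg (mul_nonneg (hp₁.1 i.1) (hp₂.1 i.2))
        (mul_nonneg (hq₁.1 j.1) (hq₂.1 j.2)), ?_, ?_⟩, rfl⟩
    · intro i
      rw [← Finset.mul_sum]
      have : ∑ j : Ω₁ × Ω₂, q j = 1 := by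
        rw [hq, Fintype.sum_prod_type]
        simp_rw [← Finset.mul_sum, ← Finset.sum_mul, hq₁.2, hq₂.2, one_mul]
      rw [this, mul_one]
    · intro j
      rw [← Finset.sum_mul]
      have : ∑ i : Ω₁ × Ω₂, p i = 1 := by
        rw [hp, Fintype.sum_prod_type]
        simp_rw [← Finset.mul_sum, ← Finset.sum_mul, hp₁.2, hp₂.2, one_mul]
      rw [this, one_mul]
  · rintro c ⟨f, hf, rfl⟩
    set f₁ : Ω₁ → Ω₁ → ℝ := fun i₁ j₁ => ∑ i₂, ∑ j₂, f (i₁, i₂) (j₁, j₂) with hf₁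
    set f₂ : Ω₂ → Ω₂ → ℝ := fun i₂ j₂ => ∑ i₁, ∑ j₁, f (i₁, i₂) (j₁, j₂) with hf₂
    have hflow₁ : IsFlow p₁ q₁ f₁ := by
      refine ⟨fun i j => Finset.sum_nonneg fun _ _ => Finset.sum_nonneg fun _ _ => hf.1 _ _,
        fun i₁ => ?_, fun j₁ => ?_⟩
      · calc ∑ j, f₁ i₁ j = ∑ i₂, ∑ j, ∑ j₂, f (i₁, i₂) (j, j₂) := Finset.sum_comm
          _ = ∑ i₂, ∑ b : Ω₁ × Ω₂, f (i₁, i₂) b := by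
              simp_rw [Fintype.sum_prod_type]
          _ = ∑ i₂, p₁ i₁ * p₂ i₂ := by
              apply Finset.sum_congr rfl; intro i₂ _; exact hf.2.1 (i₁, i₂)
          _ = p₁ i₁ := by rw [← Finset.mul_sum, hp₂.2, mul_one]
      · calc ∑ i, f₁ i j₁ = ∑ j₂, ∑ i, ∑ i₂, f (i, i₂) (j₁, j₂) := sum3_rot _
          _ = ∑ j₂, ∑ a : Ω₁ × Ω₂, f a (j₁, j₂) := by
              simp_rw [Fintype.sum_prod_type]
          _ = ∑ j₂, q₁ j₁ * q₂ j₂ := by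
              apply Finset.sum_congr rfl; intro j₂ _; exact hf.2.2 (j₁, j₂)
          _ = q₁ j₁ := by rw [← Finset.mul_sum, hq₂.2, mul_one]
    have hflow₂ : IsFlow p₂ q₂ f₂ := by
      refine ⟨fun i j => Finset.sum_nonneg fun _ _ => Finset.sum_nonneg fun _ _ => hf.1 _ _,
        fun i₂ => ?_, fun j₂ => ?_⟩
      · calc ∑ j, f₂ i₂ j = ∑ i₁, ∑ j₁, ∑ j, f (i₁, i₂) (j₁, j) :=
              (sum3_rot fun i₁ j₁ j => f (i₁, i₂) (j₁, j)).symm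
          _ = ∑ i₁, ∑ b : Ω₁ × Ω₂, f (i₁, i₂) b := by
              simp_rw [Fintype.sum_prod_type]
          _ = ∑ i₁, p₁ i₁ * p₂ i₂ := by
              apply Finset.sum_congr rfl; intro i₁ _; exact hf.2.1 (i₁, i₂)
          _ = p₂ i₂ := by rw [← Finset.sum_mul, hp₁.2, one_mul]
      · calc ∑ i, f₂ i j₂ = ∑ j₁, ∑ i₁, ∑ i, f (i₁, i) (j₁, j₂) := sum3_rev _
          _ = ∑ j₁, ∑ a : Ω₁ × Ω₂, f a (j₁, j₂) := by
              simp_rw [Fintype.sum_prod_type]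
          _ = ∑ j₁, q₁ j₁ * q₂ j₂ := by
              apply Finset.sum_congr rfl; intro j₁ _; exact hf.2.2 (j₁, j₂)
          _ = q₂ j₂ := by rw [← Finset.sum_mul, hq₁.2, one_mul]
    have A : (∑ i, ∑ j, f i j * D₁ i.1 j.1) = ∑ i₁, ∑ j₁, f₁ i₁ j₁ * D₁ i₁ j₁ := by
      simp_rw [hf₁, Finset.sum_mul, Fintype.sum_prod_type]
      apply Finset.sum_congr rfl; intro i₁ _
      exact Finset.sum_comm
    have B : (∑ i : Ω₁ × Ω₂, ∑ j : Ω₁ × Ω₂, f i j * D₂ i.2 j.2)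
        = ∑ i₂, ∑ j₂, f₂ i₂ j₂ * D₂ i₂ j₂ := by
      simp_rw [hf₂, Finset.sum_mul, Fintype.sum_prod_type]
      exact sum4_swap fun i₁ i₂ j₁ j₂ => f (i₁, i₂) (j₁, j₂) * D₂ i₂ j₂
    have key : (∑ i, ∑ j, f i j * (D₁ i.1 j.1 + D₂ i.2 j.2))
        = (∑ i₁, ∑ j₁, f₁ i₁ j₁ * D₁ i₁ j₁) + (∑ i₂, ∑ j₂, f₂ i₂ j₂ * D₂ i₂ j₂) := by
      simp_rw [mul_add, Finset.sum_add_distrib]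
      rw [A, B]
    calc EMD D₁ p₁ q₁ + EMD D₂ p₂ q₂
        ≤ (∑ i₁, ∑ j₁, f₁ i₁ j₁ * D₁ i₁ j₁) + (∑ i₂, ∑ j₂, f₂ i₂ j₂ * D₂ i₂ j₂) :=
          add_le_add (EMD_le_cost D₁ hD₁.1 _ _ f₁ hflow₁) (EMD_le_cost D₂ hD₂.1 _ _ f₂ hflow₂)
      _ = _ := key.symm
end
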